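/- arXiv:2202.00762 — 4 statements merged into one kernel-verified Lean document; each statement's English description precedes it below -/
import Mathlib

section
/- Let E₁ and E₂ be finite-dimensional real inner product spaces equipped with σ-finite measures μ₁ and μ₂, let φ, γ : E₁ → ℝ and ψ, β : E₂ → ℝ be differentiable, and assume the functions x ↦ ⟪∇φ(x), ∇γ(x)⟫, x ↦ φ(x)γ(x) are integrable with respect to μ₁ and y ↦ ψ(y)β(y), y ↦ ⟪∇ψ(y), ∇β(y)⟫ are integrable with respect to μ₂. Then ∫_{E₁×E₂} ⟪∇(φψ)(x,y), ∇(γβ)(x,y)⟫ d(μ₁ × μ₂) = (∫_{E₁} ⟪∇φ, ∇γ⟫ dμ₁)(∫_{E₂} ψ β dμ₂) + (∫_{E₁} φ γ dμ₁)(∫_{E₂} ⟪∇ψ, ∇β⟫ dμ₂). -/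
open RealInnerProductSpace MeasureTheory

/-! On the `L²` product, `(x, y) ↦ φ x * ψ y` has gradient `(ψ y • ∇φ x, φ x • ∇ψ y)`, so the
integrand is pointwise `⟪∇φ, ∇γ⟫ (ψ β) + (φ γ) ⟪∇ψ, ∇β⟫`. Each summand is a product of a function
of `x` and a function of `y`, and its integral over `μ₁.prod μ₂` factors by Fubini. -/

section

variable {E₁ E₂ : Type*}
  [NormedAddCommGroup E₁] [InnerProductSpace ℝ E₁] [CompleteSpace E₁]
  [NormedAddCommGroup E₂] [InnerProductSpace ℝ E₂] [CompleteSpace E₂]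

theorem HasGradientAt.withLp_prod_mul {φ : E₁ → ℝ} {ψ : E₂ → ℝ} {φ' : E₁} {ψ' : E₂}
    {x : E₁} {y : E₂} (hφ : HasGradientAt φ φ' x) (hψ : HasGradientAt ψ ψ' y) :
    HasGradientAt (fun q : WithLp 2 (E₁ × E₂) => φ q.ofLp.1 * ψ q.ofLp.2)
      (WithLp.toLp 2 (ψ y • φ', φ x • ψ')) (WithLp.toLp 2 (x, y)) := by
  let e := (WithLp.prodContinuousLinearEquiv 2 ℝ E₁ E₂ : WithLp 2 (E₁ × E₂) →L[ℝ] E₁ × E₂)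
  have he : HasFDerivAt WithLp.ofLp e (WithLp.toLp 2 (x, y)) := e.hasFDerivAt
  have hφ₁ := hφ.hasFDerivAt.comp _ (hasFDerivAt_fst.comp _ he)
  have hψ₂ := hψ.hasFDerivAt.comp _ (hasFDerivAt_snd.comp _ he)
  rw [hasGradientAt_iff_hasFDerivAt]
  refine (hφ₁.fun_mul hψ₂).congr_fderiv ?_
  ext v
  simp [WithLp.prod_inner_apply, real_inner_smul_left, e, add_comm]

theorem inner_gradient_withLp_prod_mul {φ γ : E₁ → ℝ} {ψ β : E₂ → ℝ} {x : E₁} {y : E₂}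
    (hφ : DifferentiableAt ℝ φ x) (hγ : DifferentiableAt ℝ γ x)
    (hψ : DifferentiableAt ℝ ψ y) (hβ : DifferentiableAt ℝ β y) :
    ⟪gradient (fun q : WithLp 2 (E₁ × E₂) => φ q.ofLp.1 * ψ q.ofLp.2) (WithLp.toLp 2 (x, y)),
      gradient (fun q : WithLp 2 (E₁ × E₂) => γ q.ofLp.1 * β q.ofLp.2) (WithLp.toLp 2 (x, y))⟫
      = ⟪gradient φ x, gradient γ x⟫ * (ψ y * β y)
        + φ x * γ x * ⟪gradient ψ y, gradient β y⟫ := by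
  rw [(hφ.hasGradientAt.withLp_prod_mul hψ.hasGradientAt).gradient,
    (hγ.hasGradientAt.withLp_prod_mul hβ.hasGradientAt).gradient]
  simp only [WithLp.prod_inner_apply, real_inner_smul_left, real_inner_smul_right]
  ring

end

theorem integral_inner_gradient_tensor_product_general {E₁ E₂ : Type*}
    [NormedAddCommGroup E₁] [InnerProductSpace ℝ E₁] [FiniteDimensional ℝ E₁]
    [MeasurableSpace E₁]
    [NormedAddCommGroup E₂] [InnerProductSpace ℝ E₂] [FiniteDimensional ℝ E₂]
    [MeasurableSpace E₂]
    (μ₁ : Measure E₁) (μ₂ : Measure E₂) [SigmaFinite μ₁] [SigmaFinite μ₂]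
    (φ γ : E₁ → ℝ) (ψ β : E₂ → ℝ)
    (hφ : Differentiable ℝ φ) (hγ : Differentiable ℝ γ)
    (hψ : Differentiable ℝ ψ) (hβ : Differentiable ℝ β)
    (h₁₁ : Integrable (fun x => ⟪gradient φ x, gradient γ x⟫) μ₁)
    (h₁₂ : Integrable (fun x => φ x * γ x) μ₁)
    (h₂₂ : Integrable (fun y => ψ y * β y) μ₂)
    (h₂₁ : Integrable (fun y => ⟪gradient ψ y, gradient β y⟫) μ₂) :
    ∫ p : E₁ × E₂,
        ⟪gradient
            (fun q : WithLp 2 (E₁ × E₂) =>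
              φ (WithLp.equiv 2 (E₁ × E₂) q).1 * ψ (WithLp.equiv 2 (E₁ × E₂) q).2)
            ((WithLp.equiv 2 (E₁ × E₂)).symm p),
          gradient
            (fun q : WithLp 2 (E₁ × E₂) =>
              γ (WithLp.equiv 2 (E₁ × E₂) q).1 * β (WithLp.equiv 2 (E₁ × E₂) q).2)
            ((WithLp.equiv 2 (E₁ × E₂)).symm p)⟫ ∂(μ₁.prod μ₂)
      = (∫ x, ⟪gradient φ x, gradient γ x⟫ ∂μ₁) * (∫ y, ψ y * β y ∂μ₂)
        + (∫ x, φ x * γ x ∂μ₁) * (∫ y, ⟪gradient ψ y, gradient β y⟫ ∂μ₂) := by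
  calc _ = ∫ p : E₁ × E₂, ⟪gradient φ p.1, gradient γ p.1⟫ * (ψ p.2 * β p.2)
          + φ p.1 * γ p.1 * ⟪gradient ψ p.2, gradient β p.2⟫ ∂(μ₁.prod μ₂) :=
        integral_congr_ae <| ae_of_all _ fun p =>
          inner_gradient_withLp_prod_mul (hφ p.1) (hγ p.1) (hψ p.2) (hβ p.2)
    _ = _ := by
        rw [integral_add (h₁₁.mul_prod h₂₂) (h₁₂.mul_prod h₂₁),
          integral_prod_mul (fun x => ⟪gradient φ x, gradient γ x⟫) (fun y => ψ y * β y),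
          integral_prod_mul (fun x => φ x * γ x) (fun y => ⟪gradient ψ y, gradient β y⟫)]

/-- Fubini factorization of the Poisson stiffness integrand for tensor product
functions: the integral over `E₁ × E₂` of `⟪∇(φψ), ∇(γβ)⟫` (gradients taken on the product
inner product space) splits as
`(∫ ⟪∇φ, ∇γ⟫ dμ₁)(∫ ψβ dμ₂) + (∫ φγ dμ₁)(∫ ⟪∇ψ, ∇β⟫ dμ₂)`. -/
theorem integral_inner_gradient_tensor_product {E₁ E₂ : Type*}
    [NormedAddCommGroup E₁] [InnerProductSpace ℝ E₁] [FiniteDimensional ℝ E₁]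
    [MeasurableSpace E₁] [BorelSpace E₁]
    [NormedAddCommGroup E₂] [InnerProductSpace ℝ E₂] [FiniteDimensional ℝ E₂]
    [MeasurableSpace E₂] [BorelSpace E₂]
    (μ₁ : Measure E₁) (μ₂ : Measure E₂) [SigmaFinite μ₁] [SigmaFinite μ₂]
    (φ γ : E₁ → ℝ) (ψ β : E₂ → ℝ)
    (hφ : Differentiable ℝ φ) (hγ : Differentiable ℝ γ)
    (hψ : Differentiable ℝ ψ) (hβ : Differentiable ℝ β)
    (h₁₁ : Integrable (fun x => ⟪gradient φ x, gradient γ x⟫) μ₁)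
    (h₁₂ : Integrable (fun x => φ x * γ x) μ₁)
    (h₂₂ : Integrable (fun y => ψ y * β y) μ₂)
    (h₂₁ : Integrable (fun y => ⟪gradient ψ y, gradient β y⟫) μ₂) :
    ∫ p : E₁ × E₂,
        ⟪gradient
            (fun q : WithLp 2 (E₁ × E₂) =>
              φ (WithLp.equiv 2 (E₁ × E₂) q).1 * ψ (WithLp.equiv 2 (E₁ × E₂) q).2)
            ((WithLp.equiv 2 (E₁ × E₂)).symm p),
          gradient
            (fun q : WithLp 2 (E₁ × E₂) =>
              γ (WithLp.equiv 2 (E₁ × E₂) q).1 * β (WithLp.equiv 2 (E₁ × E₂) q).2)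
            ((WithLp.equiv 2 (E₁ × E₂)).symm p)⟫ ∂(μ₁.prod μ₂)
      = (∫ x, ⟪gradient φ x, gradient γ x⟫ ∂μ₁) * (∫ y, ψ y * β y ∂μ₂)
        + (∫ x, φ x * γ x ∂μ₁) * (∫ y, ⟪gradient ψ y, gradient β y⟫ ∂μ₂) :=
  integral_inner_gradient_tensor_product_general μ₁ μ₂ φ γ ψ β hφ hγ hψ hβ h₁₁ h₁₂ h₂₂ h₂₁
end

section
/- Let E₁ and E₂ be finite-dimensional real inner product spaces equipped with σ-finite measures μ₁ and μ₂, and let (φ_i)_{i∈Fin N}, (γ_k)_{k∈Fin N} : E₁ → ℝ and (ψ_j)_{j∈Fin M}, (β_l)_{l∈Fin M} : E₂ → ℝ be differentiable functions such that all the products ⟪∇φ_i, ∇γ_k⟫, φ_i γ_k are μ₁-integrable and all ψ_j β_l, ⟪∇ψ_j, ∇β_l⟫ are μ₂-integrable. Define matrices K₁₁, K₁₂ ∈ Matrix (Fin N) (Fin N) ℝ by (K₁₁)_{k i} = ∫ ⟪∇φ_i, ∇γ_k⟫ dμ₁, (K₁₂)_{k i} = ∫ φ_i γ_k dμ₁,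 and K₂₁, K₂₂ ∈ Matrix (Fin M) (Fin M) ℝ by (K₂₁)_{l j} = ∫ ⟪∇ψ_j, ∇β_l⟫ dμ₂, (K₂₂)_{l j} = ∫ ψ_j β_l dμ₂. Then the matrix A ∈ Matrix (Fin N × Fin M) (Fin N × Fin M) ℝ with entries A_{(k,l),(i,j)} = ∫_{E₁×E₂} ⟪∇(φ_i ψ_j), ∇(γ_k β_l)⟫ d(μ₁ × μ₂) equals the sum of Kronecker products K₁₁ ⊗ K₂₂ + K₁₂ ⊗ K₂₁. -/
open RealInnerProductSpace MeasureTheory Kronecker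

/-!
On the L² product the gradient of `(x, y) ↦ f x * g y` is `(g y • ∇f x, f x • ∇g y)`, so
`⟪∇(φᵢψⱼ), ∇(γₖβₗ)⟫` splits into the two separable terms `⟪∇φᵢ, ∇γₖ⟫ · ψⱼβₗ` and
`φᵢγₖ · ⟪∇ψⱼ, ∇βₗ⟫`. By Fubini the integral of each is a product of a one-factor integral over
`E₁` and one over `E₂`, i.e. an entry of `K₁₁ ⊗ₖ K₂₂` resp. `K₁₂ ⊗ₖ K₂₁`.
-/

section

variable {E F : Type*} [NormedAddCommGroup E] [InnerProductSpace ℝ E] [CompleteSpace E]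
  [NormedAddCommGroup F] [InnerProductSpace ℝ F] [CompleteSpace F]

theorem HasGradientAt.mul_prod {f : E → ℝ} {g : F → ℝ} {f' : E} {g' : F} {x : E} {y : F}
    (hf : HasGradientAt f f' x) (hg : HasGradientAt g g' y) :
    HasGradientAt (fun q : WithLp 2 (E × F) => f q.fst * g q.snd)
      (WithLp.toLp 2 (g y • f', f x • g')) (WithLp.toLp 2 (x, y)) := by
  have h₁ : HasFDerivAt (fun p : E × F => f p.1) _ (x, y) :=
    hf.hasFDerivAt.comp (x, y) hasFDerivAt_fst
  have h₂ : HasFDerivAt (fun p : E × F => g p.2) _ (x, y) :=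
    hg.hasFDerivAt.comp (x, y) hasFDerivAt_snd
  have hfg := (h₁.mul h₂).comp (WithLp.toLp 2 (x, y))
    (WithLp.prodContinuousLinearEquiv 2 ℝ E F).hasFDerivAt
  rw [hasGradientAt_iff_hasFDerivAt]
  refine hfg.congr_fderiv ?_
  ext v
  simp only [ContinuousLinearMap.add_comp, ContinuousLinearMap.smul_comp,
    add_apply, smul_apply, ContinuousLinearMap.comp_apply,
    ContinuousLinearEquiv.coe_coe, WithLp.prodContinuousLinearEquiv_apply,
    ContinuousLinearMap.coe_fst', ContinuousLinearMap.coe_snd', WithLp.ofLp_fst, WithLp.ofLp_snd,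
    InnerProductSpace.toDual_apply_apply, smul_eq_mul, WithLp.prod_inner_apply,
    real_inner_smul_left]
  ring

theorem inner_gradient_mul_prod {f₁ f₂ : E → ℝ} {g₁ g₂ : F → ℝ} {p : E × F}
    (hf₁ : DifferentiableAt ℝ f₁ p.1) (hf₂ : DifferentiableAt ℝ f₂ p.1)
    (hg₁ : DifferentiableAt ℝ g₁ p.2) (hg₂ : DifferentiableAt ℝ g₂ p.2) :
    ⟪gradient (fun q : WithLp 2 (E × F) => f₁ q.fst * g₁ q.snd) (WithLp.toLp 2 p),
      gradient (fun q : WithLp 2 (E × F) => f₂ q.fst * g₂ q.snd) (WithLp.toLp 2 p)⟫ =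
      ⟪gradient f₁ p.1, gradient f₂ p.1⟫ * (g₁ p.2 * g₂ p.2) +
        f₁ p.1 * f₂ p.1 * ⟪gradient g₁ p.2, gradient g₂ p.2⟫ := by
  rw [(hf₁.hasGradientAt.mul_prod hg₁.hasGradientAt).gradient,
    (hf₂.hasGradientAt.mul_prod hg₂.hasGradientAt).gradient]
  simp only [WithLp.prod_inner_apply, real_inner_smul_left, real_inner_smul_right]
  ring

variable [MeasurableSpace E] [MeasurableSpace F] {μ : Measure E} {ν : Measure F}
  [SFinite μ] [SFinite ν]

theorem integral_inner_gradient_mul_prod {f₁ f₂ : E → ℝ} {g₁ g₂ : F → ℝ}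
    (hf₁ : Differentiable ℝ f₁) (hf₂ : Differentiable ℝ f₂)
    (hg₁ : Differentiable ℝ g₁) (hg₂ : Differentiable ℝ g₂)
    (hf : Integrable (fun x => ⟪gradient f₁ x, gradient f₂ x⟫) μ)
    (hff : Integrable (fun x => f₁ x * f₂ x) μ)
    (hgg : Integrable (fun y => g₁ y * g₂ y) ν)
    (hg : Integrable (fun y => ⟪gradient g₁ y, gradient g₂ y⟫) ν) :
    ∫ p : E × F,
      ⟪gradient (fun q : WithLp 2 (E × F) => f₁ q.fst * g₁ q.snd) (WithLp.toLp 2 p),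
        gradient (fun q : WithLp 2 (E × F) => f₂ q.fst * g₂ q.snd) (WithLp.toLp 2 p)⟫
      ∂μ.prod ν =
      (∫ x, ⟪gradient f₁ x, gradient f₂ x⟫ ∂μ) * (∫ y, g₁ y * g₂ y ∂ν) +
        (∫ x, f₁ x * f₂ x ∂μ) * ∫ y, ⟪gradient g₁ y, gradient g₂ y⟫ ∂ν := by
  simp_rw [inner_gradient_mul_prod (hf₁ _) (hf₂ _) (hg₁ _) (hg₂ _)]
  rw [integral_add (hf.mul_prod hgg) (hff.mul_prod hg),
    integral_prod_mul (fun x => ⟪gradient f₁ x, gradient f₂ x⟫) fun y => g₁ y * g₂ y,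
    integral_prod_mul (fun x => f₁ x * f₂ x) fun y => ⟪gradient g₁ y, gradient g₂ y⟫]

end

theorem stiffness_matrix_kronecker_general {E₁ E₂ : Type*} {N M : ℕ}
    [NormedAddCommGroup E₁] [InnerProductSpace ℝ E₁] [FiniteDimensional ℝ E₁]
    [MeasurableSpace E₁]
    [NormedAddCommGroup E₂] [InnerProductSpace ℝ E₂] [FiniteDimensional ℝ E₂]
    [MeasurableSpace E₂]
    (μ₁ : Measure E₁) (μ₂ : Measure E₂) [SigmaFinite μ₁] [SigmaFinite μ₂]
    (φ γ : Fin N → E₁ → ℝ) (ψ β : Fin M → E₂ → ℝ)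
    (hφ : ∀ i, Differentiable ℝ (φ i)) (hγ : ∀ k, Differentiable ℝ (γ k))
    (hψ : ∀ j, Differentiable ℝ (ψ j)) (hβ : ∀ l, Differentiable ℝ (β l))
    (h₁₁ : ∀ i k, Integrable (fun x => ⟪gradient (φ i) x, gradient (γ k) x⟫) μ₁)
    (h₁₂ : ∀ i k, Integrable (fun x => φ i x * γ k x) μ₁)
    (h₂₂ : ∀ j l, Integrable (fun y => ψ j y * β l y) μ₂)
    (h₂₁ : ∀ j l, Integrable (fun y => ⟪gradient (ψ j) y, gradient (β l) y⟫) μ₂)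
    (K₁₁ K₁₂ : Matrix (Fin N) (Fin N) ℝ) (K₂₁ K₂₂ : Matrix (Fin M) (Fin M) ℝ)
    (hK₁₁ : ∀ k i, K₁₁ k i = ∫ x, ⟪gradient (φ i) x, gradient (γ k) x⟫ ∂μ₁)
    (hK₁₂ : ∀ k i, K₁₂ k i = ∫ x, φ i x * γ k x ∂μ₁)
    (hK₂₁ : ∀ l j, K₂₁ l j = ∫ y, ⟪gradient (ψ j) y, gradient (β l) y⟫ ∂μ₂)
    (hK₂₂ : ∀ l j, K₂₂ l j = ∫ y, ψ j y * β l y ∂μ₂)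
    (A : Matrix (Fin N × Fin M) (Fin N × Fin M) ℝ)
    (hA : ∀ k l i j, A (k, l) (i, j) =
      ∫ p : E₁ × E₂,
        ⟪gradient
            (fun q : WithLp 2 (E₁ × E₂) =>
              φ i (WithLp.equiv 2 (E₁ × E₂) q).1 * ψ j (WithLp.equiv 2 (E₁ × E₂) q).2)
            ((WithLp.equiv 2 (E₁ × E₂)).symm p),
          gradient
            (fun q : WithLp 2 (E₁ × E₂) =>
              γ k (WithLp.equiv 2 (E₁ × E₂) q).1 * β l (WithLp.equiv 2 (E₁ × E₂) q).2)
            ((WithLp.equiv 2 (E₁ × E₂)).symm p)⟫ ∂(μ₁.prod μ₂)) :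
    A = K₁₁ ⊗ₖ K₂₂ + K₁₂ ⊗ₖ K₂₁ := by
  ext ⟨k, l⟩ ⟨i, j⟩
  rw [Matrix.add_apply, Matrix.kronecker_apply, Matrix.kronecker_apply, hA, hK₁₁, hK₁₂, hK₂₁, hK₂₂]
  -- `WithLp.equiv` and its inverse unfold to `ofLp` and `toLp`, so the integrands agree by `rfl`.
  exact integral_inner_gradient_mul_prod (hφ i) (hγ k) (hψ j) (hβ l)
    (h₁₁ i k) (h₁₂ i k) (h₂₂ j l) (h₂₁ j l)

/-- The global tensor product finite element stiffness matrix of the Poisson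
bilinear form, `A_{(k,l),(i,j)} = ∫_{E₁×E₂} ⟪∇(φᵢψⱼ), ∇(γₖβₗ)⟫ d(μ₁ × μ₂)`, equals the sum
of Kronecker products `K₁₁ ⊗ K₂₂ + K₁₂ ⊗ K₂₁` of the subdomain matrices. -/
theorem stiffness_matrix_kronecker {E₁ E₂ : Type*} {N M : ℕ}
    [NormedAddCommGroup E₁] [InnerProductSpace ℝ E₁] [FiniteDimensional ℝ E₁]
    [MeasurableSpace E₁] [BorelSpace E₁]
    [NormedAddCommGroup E₂] [InnerProductSpace ℝ E₂] [FiniteDimensional ℝ E₂]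
    [MeasurableSpace E₂] [BorelSpace E₂]
    (μ₁ : Measure E₁) (μ₂ : Measure E₂) [SigmaFinite μ₁] [SigmaFinite μ₂]
    (φ γ : Fin N → E₁ → ℝ) (ψ β : Fin M → E₂ → ℝ)
    (hφ : ∀ i, Differentiable ℝ (φ i)) (hγ : ∀ k, Differentiable ℝ (γ k))
    (hψ : ∀ j, Differentiable ℝ (ψ j)) (hβ : ∀ l, Differentiable ℝ (β l))
    (h₁₁ : ∀ i k, Integrable (fun x => ⟪gradient (φ i) x, gradient (γ k) x⟫) μ₁)
    (h₁₂ : ∀ i k, Integrable (fun x => φ i x * γ k x) μ₁)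
    (h₂₂ : ∀ j l, Integrable (fun y => ψ j y * β l y) μ₂)
    (h₂₁ : ∀ j l, Integrable (fun y => ⟪gradient (ψ j) y, gradient (β l) y⟫) μ₂)
    (K₁₁ K₁₂ : Matrix (Fin N) (Fin N) ℝ) (K₂₁ K₂₂ : Matrix (Fin M) (Fin M) ℝ)
    (hK₁₁ : ∀ k i, K₁₁ k i = ∫ x, ⟪gradient (φ i) x, gradient (γ k) x⟫ ∂μ₁)
    (hK₁₂ : ∀ k i, K₁₂ k i = ∫ x, φ i x * γ k x ∂μ₁)
    (hK₂₁ : ∀ l j, K₂₁ l j = ∫ y, ⟪gradient (ψ j) y, gradient (β l) y⟫ ∂μ₂)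
    (hK₂₂ : ∀ l j, K₂₂ l j = ∫ y, ψ j y * β l y ∂μ₂)
    (A : Matrix (Fin N × Fin M) (Fin N × Fin M) ℝ)
    (hA : ∀ k l i j, A (k, l) (i, j) =
      ∫ p : E₁ × E₂,
        ⟪gradient
            (fun q : WithLp 2 (E₁ × E₂) =>
              φ i (WithLp.equiv 2 (E₁ × E₂) q).1 * ψ j (WithLp.equiv 2 (E₁ × E₂) q).2)
            ((WithLp.equiv 2 (E₁ × E₂)).symm p),
          gradient
            (fun q : WithLp 2 (E₁ × E₂) =>
              γ k (WithLp.equiv 2 (E₁ × E₂) q).1 * β l (WithLp.equiv 2 (E₁ × E₂) q).2)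
            ((WithLp.equiv 2 (E₁ × E₂)).symm p)⟫ ∂(μ₁.prod μ₂)) :
    A = K₁₁ ⊗ₖ K₂₂ + K₁₂ ⊗ₖ K₂₁ :=
  stiffness_matrix_kronecker_general μ₁ μ₂ φ γ ψ β hφ hγ hψ hβ h₁₁ h₁₂ h₂₂ h₂₁ K₁₁ K₁₂ K₂₁ K₂₂ hK₁₁
    hK₁₂ hK₂₁ hK₂₂ A hA
end

section
/- Under the setting of the Kronecker stiffness matrix identity (families φ_i, γ_k on E₁ and ψ_j, β_l on E₂ with the stated integrability, matrices K₁₁, K₁₂, K₂₁, K₂₂ as defined there), let U ∈ (Fin N × Fin M) → ℝ be coefficients, let u_h(x,y) = Σ_{i,j} U_{(i,j)} φ_i(x) ψ_j(y), and let G ∈ (Fin N × Fin M) → ℝ. Then the discrete Galerkin equations ∫_{E₁×E₂} ⟪∇u_h, ∇(γ_k β_l)⟫ d(μ₁ × μ₂) = G_{(k,l)} hold for all (k,l) ∈ Fin N × Fin M if and only if the linear system (K₁₁ ⊗ K₂₂ + K₁₂ ⊗ K₂₁) · U = G holds, where · denotes matrix–vector multiplication over the index set Fin N × Fin M. -/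
open RealInnerProductSpace MeasureTheory Kronecker

/-! On the Euclidean product `E₁ × E₂` the gradient of `(x, y) ↦ f x * g y` is
`(g y • ∇f x, f x • ∇g y)`, so for tensor-product trial and test functions
`⟪∇(φ ⊗ ψ), ∇(γ ⊗ β)⟫ = ⟪∇φ, ∇γ⟫ * (ψ * β) + (φ * γ) * ⟪∇ψ, ∇β⟫`, and Fubini splits its
integral into `K₁₁ * K₂₂ + K₁₂ * K₂₁`. Since `u_h` and its gradient are linear in `U`, the
`(k, l)` Galerkin equation is the `(k, l)` row of the Kronecker system. -/

section GradientLinearity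

variable {F : Type*} [NormedAddCommGroup F] [InnerProductSpace ℝ F] [CompleteSpace F] {x : F}

theorem HasGradientAt.const_mul {f : F → ℝ} {f' : F} (h : HasGradientAt f f' x) (c : ℝ) :
    HasGradientAt (fun y => c * f y) (c • f') x := by
  rw [hasGradientAt_iff_hasFDerivAt, map_smul]
  exact h.hasFDerivAt.const_mul c

theorem HasGradientAt.sum {ι : Type*} {s : Finset ι} {f : ι → F → ℝ} {f' : ι → F}
    (h : ∀ i ∈ s, HasGradientAt (f i) (f' i) x) :
    HasGradientAt (fun y => ∑ i ∈ s, f i y) (∑ i ∈ s, f' i) x := by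
  rw [hasGradientAt_iff_hasFDerivAt, map_sum]
  exact HasFDerivAt.fun_sum fun i hi => (h i hi).hasFDerivAt

theorem gradient_sum_const_mul {ι : Type*} (s : Finset ι) (c : ι → ℝ) {f : ι → F → ℝ}
    (hf : ∀ i ∈ s, DifferentiableAt ℝ (f i) x) :
    gradient (fun y => ∑ i ∈ s, c i * f i y) x = ∑ i ∈ s, c i • gradient (f i) x :=
  (HasGradientAt.sum fun i hi => (hf i hi).hasGradientAt.const_mul (c i)).gradient

end GradientLinearity

section TensorProduct

variable {E₁ E₂ : Type*}
  [NormedAddCommGroup E₁] [InnerProductSpace ℝ E₁] [CompleteSpace E₁]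
  [NormedAddCommGroup E₂] [InnerProductSpace ℝ E₂] [CompleteSpace E₂]

def tensorProd (f : E₁ → ℝ) (g : E₂ → ℝ) : WithLp 2 (E₁ × E₂) → ℝ :=
  fun q => f (WithLp.equiv 2 (E₁ × E₂) q).1 * g (WithLp.equiv 2 (E₁ × E₂) q).2

theorem hasGradientAt_tensorProd {f : E₁ → ℝ} {g : E₂ → ℝ} {p : E₁ × E₂}
    (hf : DifferentiableAt ℝ f p.1) (hg : DifferentiableAt ℝ g p.2) :
    HasGradientAt (tensorProd f g)
      (WithLp.toLp 2 (g p.2 • gradient f p.1, f p.1 • gradient g p.2)) (WithLp.toLp 2 p) := by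
  have hfst : HasFDerivAt (fun q : WithLp 2 (E₁ × E₂) => f q.fst)
      ((fderiv ℝ f p.1).comp (WithLp.fstL 2 ℝ E₁ E₂)) (WithLp.toLp 2 p) :=
    hf.hasFDerivAt.comp (x := WithLp.toLp 2 p) (WithLp.fstL 2 ℝ E₁ E₂).hasFDerivAt
  have hsnd : HasFDerivAt (fun q : WithLp 2 (E₁ × E₂) => g q.snd)
      ((fderiv ℝ g p.2).comp (WithLp.sndL 2 ℝ E₁ E₂)) (WithLp.toLp 2 p) :=
    hg.hasFDerivAt.comp (x := WithLp.toLp 2 p) (WithLp.sndL 2 ℝ E₁ E₂).hasFDerivAt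
  have hD : InnerProductSpace.toDual ℝ (WithLp 2 (E₁ × E₂))
      (WithLp.toLp 2 (g p.2 • gradient f p.1, f p.1 • gradient g p.2)) =
        f p.1 • (fderiv ℝ g p.2).comp (WithLp.sndL 2 ℝ E₁ E₂) +
          g p.2 • (fderiv ℝ f p.1).comp (WithLp.fstL 2 ℝ E₁ E₂) := by
    ext v
    simp only [InnerProductSpace.toDual_apply_apply, WithLp.prod_inner_apply, WithLp.ofLp_fst,
      WithLp.ofLp_snd, real_inner_smul_left, inner_gradient_left, add_apply,
      smul_apply, ContinuousLinearMap.comp_apply, WithLp.fstL_apply,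
      WithLp.sndL_apply, smul_eq_mul]
    ring
  rw [hasGradientAt_iff_hasFDerivAt, hD]
  exact hfst.fun_mul hsnd

theorem inner_gradient_tensorProd {f f' : E₁ → ℝ} {g g' : E₂ → ℝ}
    (hf : Differentiable ℝ f) (hf' : Differentiable ℝ f')
    (hg : Differentiable ℝ g) (hg' : Differentiable ℝ g') (p : E₁ × E₂) :
    ⟪gradient (tensorProd f g) (WithLp.toLp 2 p), gradient (tensorProd f' g') (WithLp.toLp 2 p)⟫ =
      ⟪gradient f p.1, gradient f' p.1⟫ * (g p.2 * g' p.2) +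
        f p.1 * f' p.1 * ⟪gradient g p.2, gradient g' p.2⟫ := by
  rw [(hasGradientAt_tensorProd (hf _) (hg _)).gradient,
    (hasGradientAt_tensorProd (hf' _) (hg' _)).gradient]
  simp only [WithLp.prod_inner_apply, real_inner_smul_left, real_inner_smul_right]
  ring

variable [MeasurableSpace E₁] [MeasurableSpace E₂] {μ₁ : Measure E₁} {μ₂ : Measure E₂}

theorem integrable_inner_gradient_tensorProd {f f' : E₁ → ℝ} {g g' : E₂ → ℝ}
    (hf : Differentiable ℝ f) (hf' : Differentiable ℝ f')
    (hg : Differentiable ℝ g) (hg' : Differentiable ℝ g')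
    (h₁₁ : Integrable (fun x => ⟪gradient f x, gradient f' x⟫) μ₁)
    (h₁₂ : Integrable (fun x => f x * f' x) μ₁)
    (h₂₂ : Integrable (fun y => g y * g' y) μ₂)
    (h₂₁ : Integrable (fun y => ⟪gradient g y, gradient g' y⟫) μ₂) :
    Integrable (fun p : E₁ × E₂ =>
      ⟪gradient (tensorProd f g) (WithLp.toLp 2 p),
        gradient (tensorProd f' g') (WithLp.toLp 2 p)⟫) (μ₁.prod μ₂) := by
  simp only [inner_gradient_tensorProd hf hf' hg hg']
  exact (h₁₁.mul_prod h₂₂).add (h₁₂.mul_prod h₂₁)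

theorem integral_inner_gradient_tensorProd [SFinite μ₁] [SFinite μ₂]
    {f f' : E₁ → ℝ} {g g' : E₂ → ℝ}
    (hf : Differentiable ℝ f) (hf' : Differentiable ℝ f')
    (hg : Differentiable ℝ g) (hg' : Differentiable ℝ g')
    (h₁₁ : Integrable (fun x => ⟪gradient f x, gradient f' x⟫) μ₁)
    (h₁₂ : Integrable (fun x => f x * f' x) μ₁)
    (h₂₂ : Integrable (fun y => g y * g' y) μ₂)
    (h₂₁ : Integrable (fun y => ⟪gradient g y, gradient g' y⟫) μ₂) :
    ∫ p : E₁ × E₂, ⟪gradient (tensorProd f g) (WithLp.toLp 2 p),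
        gradient (tensorProd f' g') (WithLp.toLp 2 p)⟫ ∂(μ₁.prod μ₂) =
      (∫ x, ⟪gradient f x, gradient f' x⟫ ∂μ₁) * (∫ y, g y * g' y ∂μ₂) +
        (∫ x, f x * f' x ∂μ₁) * (∫ y, ⟪gradient g y, gradient g' y⟫ ∂μ₂) := by
  simp only [inner_gradient_tensorProd hf hf' hg hg']
  rw [integral_add (h₁₁.mul_prod h₂₂) (h₁₂.mul_prod h₂₁),
    integral_prod_mul (fun x => ⟪gradient f x, gradient f' x⟫) (fun y => g y * g' y),
    integral_prod_mul (fun x => f x * f' x) (fun y => ⟪gradient g y, gradient g' y⟫)]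

end TensorProduct

theorem galerkin_system_iff_kronecker_system_general {E₁ E₂ : Type*} {N M : ℕ}
    [NormedAddCommGroup E₁] [InnerProductSpace ℝ E₁] [FiniteDimensional ℝ E₁]
    [MeasurableSpace E₁]
    [NormedAddCommGroup E₂] [InnerProductSpace ℝ E₂] [FiniteDimensional ℝ E₂]
    [MeasurableSpace E₂]
    (μ₁ : Measure E₁) (μ₂ : Measure E₂) [SigmaFinite μ₁] [SigmaFinite μ₂]
    (φ γ : Fin N → E₁ → ℝ) (ψ β : Fin M → E₂ → ℝ)
    (hφ : ∀ i, Differentiable ℝ (φ i)) (hγ : ∀ k, Differentiable ℝ (γ k))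
    (hψ : ∀ j, Differentiable ℝ (ψ j)) (hβ : ∀ l, Differentiable ℝ (β l))
    (h₁₁ : ∀ i k, Integrable (fun x => ⟪gradient (φ i) x, gradient (γ k) x⟫) μ₁)
    (h₁₂ : ∀ i k, Integrable (fun x => φ i x * γ k x) μ₁)
    (h₂₂ : ∀ j l, Integrable (fun y => ψ j y * β l y) μ₂)
    (h₂₁ : ∀ j l, Integrable (fun y => ⟪gradient (ψ j) y, gradient (β l) y⟫) μ₂)
    (K₁₁ K₁₂ : Matrix (Fin N) (Fin N) ℝ) (K₂₁ K₂₂ : Matrix (Fin M) (Fin M) ℝ)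
    (hK₁₁ : ∀ k i, K₁₁ k i = ∫ x, ⟪gradient (φ i) x, gradient (γ k) x⟫ ∂μ₁)
    (hK₁₂ : ∀ k i, K₁₂ k i = ∫ x, φ i x * γ k x ∂μ₁)
    (hK₂₁ : ∀ l j, K₂₁ l j = ∫ y, ⟪gradient (ψ j) y, gradient (β l) y⟫ ∂μ₂)
    (hK₂₂ : ∀ l j, K₂₂ l j = ∫ y, ψ j y * β l y ∂μ₂)
    (U G : Fin N × Fin M → ℝ)
    (uh : WithLp 2 (E₁ × E₂) → ℝ)
    (huh : ∀ q, uh q = ∑ i, ∑ j,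
      U (i, j) * (φ i (WithLp.equiv 2 (E₁ × E₂) q).1 * ψ j (WithLp.equiv 2 (E₁ × E₂) q).2)) :
    (∀ k l,
      ∫ p : E₁ × E₂,
          ⟪gradient uh ((WithLp.equiv 2 (E₁ × E₂)).symm p),
            gradient
              (fun q : WithLp 2 (E₁ × E₂) =>
                γ k (WithLp.equiv 2 (E₁ × E₂) q).1 * β l (WithLp.equiv 2 (E₁ × E₂) q).2)
              ((WithLp.equiv 2 (E₁ × E₂)).symm p)⟫ ∂(μ₁.prod μ₂) = G (k, l))
      ↔ (K₁₁ ⊗ₖ K₂₂ + K₁₂ ⊗ₖ K₂₁).mulVec U = G := by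
  have huh' : uh = fun q => ∑ ij : Fin N × Fin M, U ij * tensorProd (φ ij.1) (ψ ij.2) q :=
    funext fun q => by rw [huh, Fintype.sum_prod_type]; rfl
  have hgrad : ∀ p : E₁ × E₂, gradient uh (WithLp.toLp 2 p) =
      ∑ ij : Fin N × Fin M, U ij • gradient (tensorProd (φ ij.1) (ψ ij.2)) (WithLp.toLp 2 p) :=
    fun p => by
      rw [huh', gradient_sum_const_mul]
      exact fun ij _ => (hasGradientAt_tensorProd (hφ ij.1 _) (hψ ij.2 _)).differentiableAt
  have key : ∀ k l, ∫ p : E₁ × E₂, ⟪gradient uh (WithLp.toLp 2 p),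
      gradient (tensorProd (γ k) (β l)) (WithLp.toLp 2 p)⟫ ∂(μ₁.prod μ₂) =
        (K₁₁ ⊗ₖ K₂₂ + K₁₂ ⊗ₖ K₂₁).mulVec U (k, l) := by
    intro k l
    simp only [hgrad, sum_inner, real_inner_smul_left]
    rw [integral_finsetSum _ fun ij _ => ((integrable_inner_gradient_tensorProd (hφ ij.1) (hγ k)
      (hψ ij.2) (hβ l) (h₁₁ _ _) (h₁₂ _ _) (h₂₂ _ _) (h₂₁ _ _)).const_mul _)]
    simp only [integral_const_mul, integral_inner_gradient_tensorProd (hφ _) (hγ k) (hψ _) (hβ l)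
      (h₁₁ _ _) (h₁₂ _ _) (h₂₂ _ _) (h₂₁ _ _), ← hK₁₁, ← hK₁₂, ← hK₂₁, ← hK₂₂]
    simp only [Matrix.mulVec, dotProduct, Matrix.add_apply, Matrix.kroneckerMap_apply, mul_comm]
  exact ⟨fun h => funext fun kl => (key kl.1 kl.2).symm.trans (h kl.1 kl.2),
    fun h k l => (key k l).trans (congrFun h (k, l))⟩

/-- The discrete Galerkin equations for the tensor product finite element
discretization of the Poisson bilinear form, with trial function
`u_h(x,y) = Σ_{i,j} U_{(i,j)} φᵢ(x) ψⱼ(y)` and test functions `γₖ βₗ`, hold for all `(k,l)`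
if and only if the Kronecker-structured linear system
`(K₁₁ ⊗ K₂₂ + K₁₂ ⊗ K₂₁) · U = G` holds. -/
theorem galerkin_system_iff_kronecker_system {E₁ E₂ : Type*} {N M : ℕ}
    [NormedAddCommGroup E₁] [InnerProductSpace ℝ E₁] [FiniteDimensional ℝ E₁]
    [MeasurableSpace E₁] [BorelSpace E₁]
    [NormedAddCommGroup E₂] [InnerProductSpace ℝ E₂] [FiniteDimensional ℝ E₂]
    [MeasurableSpace E₂] [BorelSpace E₂]
    (μ₁ : Measure E₁) (μ₂ : Measure E₂) [SigmaFinite μ₁] [SigmaFinite μ₂]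
    (φ γ : Fin N → E₁ → ℝ) (ψ β : Fin M → E₂ → ℝ)
    (hφ : ∀ i, Differentiable ℝ (φ i)) (hγ : ∀ k, Differentiable ℝ (γ k))
    (hψ : ∀ j, Differentiable ℝ (ψ j)) (hβ : ∀ l, Differentiable ℝ (β l))
    (h₁₁ : ∀ i k, Integrable (fun x => ⟪gradient (φ i) x, gradient (γ k) x⟫) μ₁)
    (h₁₂ : ∀ i k, Integrable (fun x => φ i x * γ k x) μ₁)
    (h₂₂ : ∀ j l, Integrable (fun y => ψ j y * β l y) μ₂)
    (h₂₁ : ∀ j l, Integrable (fun y => ⟪gradient (ψ j) y, gradient (β l) y⟫) μ₂)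
    (K₁₁ K₁₂ : Matrix (Fin N) (Fin N) ℝ) (K₂₁ K₂₂ : Matrix (Fin M) (Fin M) ℝ)
    (hK₁₁ : ∀ k i, K₁₁ k i = ∫ x, ⟪gradient (φ i) x, gradient (γ k) x⟫ ∂μ₁)
    (hK₁₂ : ∀ k i, K₁₂ k i = ∫ x, φ i x * γ k x ∂μ₁)
    (hK₂₁ : ∀ l j, K₂₁ l j = ∫ y, ⟪gradient (ψ j) y, gradient (β l) y⟫ ∂μ₂)
    (hK₂₂ : ∀ l j, K₂₂ l j = ∫ y, ψ j y * β l y ∂μ₂)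
    (U G : Fin N × Fin M → ℝ)
    (uh : WithLp 2 (E₁ × E₂) → ℝ)
    (huh : ∀ q, uh q = ∑ i, ∑ j,
      U (i, j) * (φ i (WithLp.equiv 2 (E₁ × E₂) q).1 * ψ j (WithLp.equiv 2 (E₁ × E₂) q).2)) :
    (∀ k l,
      ∫ p : E₁ × E₂,
          ⟪gradient uh ((WithLp.equiv 2 (E₁ × E₂)).symm p),
            gradient
              (fun q : WithLp 2 (E₁ × E₂) =>
                γ k (WithLp.equiv 2 (E₁ × E₂) q).1 * β l (WithLp.equiv 2 (E₁ × E₂) q).2)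
              ((WithLp.equiv 2 (E₁ × E₂)).symm p)⟫ ∂(μ₁.prod μ₂) = G (k, l))
      ↔ (K₁₁ ⊗ₖ K₂₂ + K₁₂ ⊗ₖ K₂₁).mulVec U = G :=
  galerkin_system_iff_kronecker_system_general μ₁ μ₂ φ γ ψ β hφ hγ hψ hβ h₁₁ h₁₂ h₂₂ h₂₁ K₁₁ K₁₂ K₂₁
    K₂₂ hK₁₁ hK₁₂ hK₂₁ hK₂₂ U G uh huh
end

section
/- Let E₁ and E₂ be finite-dimensional real inner product spaces equipped with σ-finite measures μ₁ and μ₂, let b₂ ∈ E₂, b = (0, b₂), and let κ, τ ∈ ℝ. Let (φ_i)_{i∈Fin N}, (γ_k)_{k∈Fin N} : E₁ → ℝ and (ψ_j)_{j∈Fin M}, (β_l)_{l∈Fin M} : E₂ → ℝ be twice continuously differentiable families such that all integrands below are integrable. Define matrices (K₁₁)_{ki} = ∫⟪∇φ_i,∇γ_k⟫dμ₁, (K₁₂)_{ki} = ∫φ_i γ_k dμ₁, (K₁₃)_{ki} = ∫Δφ_i · γ_k dμ₁ on Fin N, and (K₂₁)_{lj} = ∫⟪∇ψ_j,∇β_l⟫dμ₂,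 (K₂₂)_{lj} = ∫ψ_j β_l dμ₂, (K₂₃)_{lj} = ∫⟪b₂,∇ψ_j⟫ β_l dμ₂, (K₂₄)_{lj} = ∫ψ_j ⟪b₂,∇β_l⟫ dμ₂, (K₂₅)_{lj} = ∫Δψ_j · ⟪b₂,∇β_l⟫ dμ₂, (K₂₆)_{lj} = ∫⟪b₂,∇ψ_j⟫⟪b₂,∇β_l⟫ dμ₂ on Fin M. Then the matrix S on Fin N × Fin M with entries S_{(k,l),(i,j)} = ∫_{E₁×E₂} [ κ ⟪∇(φ_i ψ_j), ∇(γ_k β_l)⟫ + ⟪b, ∇(φ_i ψ_j)⟫ γ_k β_l + (−κ Δ(φ_i ψ_j) + ⟪b, ∇(φ_i ψ_j)⟫) · τ ⟪b, ∇(γ_k β_l)⟫ ] d(μ₁ × μ₂) equals κ K₁₁ ⊗ K₂₂ + κ K₁₂ ⊗ K₂₁ + K₁₂ ⊗ K₂₃ − κτ K₁₃ ⊗ K₂₄ − κτ K₁₂ ⊗ K₂₅ + τ K₁₂ ⊗ K₂₆. -/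
open RealInnerProductSpace MeasureTheory Kronecker

/-- The Laplacian of a real-valued function on a finite-dimensional real inner product
space: the sum, over an orthonormal basis `(eᵢ)`, of the second directional derivatives
of `f` in the directions `eᵢ`. -/
noncomputable def laplacian {E : Type*} [NormedAddCommGroup E] [InnerProductSpace ℝ E]
    [FiniteDimensional ℝ E] (f : E → ℝ) (x : E) : ℝ :=
  ∑ i, iteratedDeriv 2 (fun t : ℝ => f (x + t • stdOrthonormalBasis ℝ E i)) 0

/-! The gradient of `(x, y) ↦ φ x ψ y` is `(ψ ∇φ, φ ∇ψ)` and, computing the Laplacian in the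
product of orthonormal bases of `E₁` and `E₂`, its Laplacian is `Δφ ψ + φ Δψ`. Since
`b = (0, b₂)`, every entry of `S` is therefore the integral of a linear combination of six
separable products `f x * g y`, and Fubini turns each of them into a product of integrals,
i.e. an entry of the corresponding Kronecker product. -/

theorem iteratedDeriv_comp_add_smul {E F : Type*} [NormedAddCommGroup E] [NormedSpace ℝ E]
    [NormedAddCommGroup F] [NormedSpace ℝ F] {n : ℕ} {f : E → F} (hf : ContDiff ℝ n f)
    (x v : E) (t : ℝ) :
    iteratedDeriv n (fun s : ℝ => f (x + s • v)) t =
      iteratedFDeriv ℝ n f (x + t • v) fun _ => v := by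
  have hshift : ContDiff ℝ n fun y => f (x + y) := hf.comp (contDiff_const.add contDiff_id)
  have hline : (fun s : ℝ => f (x + s • v)) =
      (fun y => f (x + y)) ∘ ContinuousLinearMap.toSpanSingleton ℝ v := rfl
  rw [iteratedDeriv_eq_iteratedFDeriv, hline,
    ContinuousLinearMap.iteratedFDeriv_comp_right _ hshift _ le_rfl,
    ContinuousMultilinearMap.compContinuousLinearMap_apply, iteratedFDeriv_comp_add_left]
  simp only [ContinuousLinearMap.toSpanSingleton_apply, one_smul]

open InnerProductSpace in
/-- Both sides are the trace of the Hessian, which the Laplacian `Δ` of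
`InnerProductSpace.instLaplacian` computes in any orthonormal basis. -/
theorem laplacian_eq_sum_orthonormalBasis {E ι : Type*} [NormedAddCommGroup E]
    [InnerProductSpace ℝ E] [FiniteDimensional ℝ E] [Fintype ι] {f : E → ℝ}
    (hf : ContDiff ℝ 2 f) (v : OrthonormalBasis ι ℝ E) (x : E) :
    laplacian f x = ∑ i, iteratedDeriv 2 (fun t : ℝ => f (x + t • v i)) 0 := by
  have hpair : ∀ w : E, (fun _ : Fin 2 => w) = ![w, w] := fun w => by
    ext i; fin_cases i <;> rfl
  simp only [laplacian, iteratedDeriv_comp_add_smul hf, zero_smul, add_zero, hpair]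
  exact (congrFun (laplacian_eq_iteratedFDeriv_orthonormalBasis f _) x).symm.trans
    (congrFun (laplacian_eq_iteratedFDeriv_orthonormalBasis f v) x)

section ProdMul

variable {E₁ E₂ : Type*} [NormedAddCommGroup E₁] [InnerProductSpace ℝ E₁]
  [NormedAddCommGroup E₂] [InnerProductSpace ℝ E₂] {φ : E₁ → ℝ} {ψ : E₂ → ℝ}

theorem contDiff_prod_mul {n : WithTop ℕ∞} (hφ : ContDiff ℝ n φ) (hψ : ContDiff ℝ n ψ) :
    ContDiff ℝ n fun q : WithLp 2 (E₁ × E₂) => φ q.ofLp.1 * ψ q.ofLp.2 :=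
  have hL := (WithLp.prodContinuousLinearEquiv 2 ℝ E₁ E₂).contDiff (n := n)
  (hφ.comp hL.fst).mul (hψ.comp hL.snd)

variable [FiniteDimensional ℝ E₁] [FiniteDimensional ℝ E₂]

theorem gradient_prod_mul {p : E₁ × E₂} (hφ : DifferentiableAt ℝ φ p.1)
    (hψ : DifferentiableAt ℝ ψ p.2) :
    gradient (fun q : WithLp 2 (E₁ × E₂) => φ q.ofLp.1 * ψ q.ofLp.2) (WithLp.toLp 2 p) =
      WithLp.toLp 2 (ψ p.2 • gradient φ p.1, φ p.1 • gradient ψ p.2) := by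
  let L : WithLp 2 (E₁ × E₂) →L[ℝ] E₁ × E₂ := WithLp.prodContinuousLinearEquiv 2 ℝ E₁ E₂
  have h₁ := hφ.hasFDerivAt.comp (WithLp.toLp 2 p)
    ((ContinuousLinearMap.fst ℝ E₁ E₂).comp L).hasFDerivAt
  have h₂ := hψ.hasFDerivAt.comp (WithLp.toLp 2 p)
    ((ContinuousLinearMap.snd ℝ E₁ E₂).comp L).hasFDerivAt
  refine HasGradientAt.gradient (hasGradientAt_iff_hasFDerivAt.2 ((h₁.mul h₂).congr_fderiv ?_))
  ext w
  simp only [L, Function.comp_apply, add_apply, smul_apply, ContinuousLinearMap.comp_apply,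
    ContinuousLinearEquiv.coe_coe, WithLp.prodContinuousLinearEquiv_apply,
    ContinuousLinearMap.coe_fst', ContinuousLinearMap.coe_snd', InnerProductSpace.toDual_apply_apply, WithLp.prod_inner_apply,
    real_inner_smul_left, inner_gradient_left, smul_eq_mul]
  ring

/-- Along a basis vector of either factor, one of the two functions is frozen, so the
second directional derivatives split. -/
theorem laplacian_prod_mul (hφ : ContDiff ℝ 2 φ) (hψ : ContDiff ℝ 2 ψ) (p : E₁ × E₂) :
    laplacian (fun q : WithLp 2 (E₁ × E₂) => φ q.ofLp.1 * ψ q.ofLp.2) (WithLp.toLp 2 p) =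
      laplacian φ p.1 * ψ p.2 + φ p.1 * laplacian ψ p.2 := by
  rw [laplacian_eq_sum_orthonormalBasis (contDiff_prod_mul hφ hψ)
    ((stdOrthonormalBasis ℝ E₁).prod (stdOrthonormalBasis ℝ E₂)), Fintype.sum_sum_type]
  simp [laplacian, Finset.sum_mul, Finset.mul_sum]

end ProdMul

theorem integral_sum_prod_mul {α β ι : Type*} [MeasurableSpace α] [MeasurableSpace β]
    {μ : Measure α} {ν : Measure β} [SFinite μ] [SFinite ν] [Fintype ι] (c : ι → ℝ)
    {f : ι → α → ℝ} {g : ι → β → ℝ} (hf : ∀ m, Integrable (f m) μ)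
    (hg : ∀ m, Integrable (g m) ν) :
    ∫ p, ∑ m, c m * (f m p.1 * g m p.2) ∂μ.prod ν =
      ∑ m, c m * ((∫ x, f m x ∂μ) * ∫ y, g m y ∂ν) := by
  rw [integral_finsetSum _ fun m _ => ((hf m).mul_prod (hg m)).const_mul (c m)]
  simp only [integral_const_mul, integral_prod_mul]

theorem supg_stiffness_matrix_kronecker_general {E₁ E₂ : Type*} {N M : ℕ}
    [NormedAddCommGroup E₁] [InnerProductSpace ℝ E₁] [FiniteDimensional ℝ E₁]
    [MeasurableSpace E₁]
    [NormedAddCommGroup E₂] [InnerProductSpace ℝ E₂] [FiniteDimensional ℝ E₂]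
    [MeasurableSpace E₂]
    (μ₁ : Measure E₁) (μ₂ : Measure E₂) [SigmaFinite μ₁] [SigmaFinite μ₂]
    (b₂ : E₂) (κ τ : ℝ)
    (φ γ : Fin N → E₁ → ℝ) (ψ β : Fin M → E₂ → ℝ)
    (hφ : ∀ i, ContDiff ℝ 2 (φ i)) (hγ : ∀ k, ContDiff ℝ 2 (γ k))
    (hψ : ∀ j, ContDiff ℝ 2 (ψ j)) (hβ : ∀ l, ContDiff ℝ 2 (β l))
    (i₁₁ : ∀ i k, Integrable (fun x => ⟪gradient (φ i) x, gradient (γ k) x⟫) μ₁)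
    (i₁₂ : ∀ i k, Integrable (fun x => φ i x * γ k x) μ₁)
    (i₁₃ : ∀ i k, Integrable (fun x => laplacian (φ i) x * γ k x) μ₁)
    (i₂₁ : ∀ j l, Integrable (fun y => ⟪gradient (ψ j) y, gradient (β l) y⟫) μ₂)
    (i₂₂ : ∀ j l, Integrable (fun y => ψ j y * β l y) μ₂)
    (i₂₃ : ∀ j l, Integrable (fun y => ⟪b₂, gradient (ψ j) y⟫ * β l y) μ₂)
    (i₂₄ : ∀ j l, Integrable (fun y => ψ j y * ⟪b₂, gradient (β l) y⟫) μ₂)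
    (i₂₅ : ∀ j l, Integrable (fun y => laplacian (ψ j) y * ⟪b₂, gradient (β l) y⟫) μ₂)
    (i₂₆ : ∀ j l, Integrable (fun y => ⟪b₂, gradient (ψ j) y⟫ * ⟪b₂, gradient (β l) y⟫) μ₂)
    (K₁₁ K₁₂ K₁₃ : Matrix (Fin N) (Fin N) ℝ)
    (K₂₁ K₂₂ K₂₃ K₂₄ K₂₅ K₂₆ : Matrix (Fin M) (Fin M) ℝ)
    (hK₁₁ : ∀ k i, K₁₁ k i = ∫ x, ⟪gradient (φ i) x, gradient (γ k) x⟫ ∂μ₁)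
    (hK₁₂ : ∀ k i, K₁₂ k i = ∫ x, φ i x * γ k x ∂μ₁)
    (hK₁₃ : ∀ k i, K₁₃ k i = ∫ x, laplacian (φ i) x * γ k x ∂μ₁)
    (hK₂₁ : ∀ l j, K₂₁ l j = ∫ y, ⟪gradient (ψ j) y, gradient (β l) y⟫ ∂μ₂)
    (hK₂₂ : ∀ l j, K₂₂ l j = ∫ y, ψ j y * β l y ∂μ₂)
    (hK₂₃ : ∀ l j, K₂₃ l j = ∫ y, ⟪b₂, gradient (ψ j) y⟫ * β l y ∂μ₂)
    (hK₂₄ : ∀ l j, K₂₄ l j = ∫ y, ψ j y * ⟪b₂, gradient (β l) y⟫ ∂μ₂)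
    (hK₂₅ : ∀ l j, K₂₅ l j = ∫ y, laplacian (ψ j) y * ⟪b₂, gradient (β l) y⟫ ∂μ₂)
    (hK₂₆ : ∀ l j, K₂₆ l j = ∫ y, ⟪b₂, gradient (ψ j) y⟫ * ⟪b₂, gradient (β l) y⟫ ∂μ₂)
    (S : Matrix (Fin N × Fin M) (Fin N × Fin M) ℝ)
    (hS : ∀ k l i j, S (k, l) (i, j) =
      ∫ p : E₁ × E₂,
        (κ * ⟪gradient
                (fun q : WithLp 2 (E₁ × E₂) =>
                  φ i (WithLp.equiv 2 (E₁ × E₂) q).1 * ψ j (WithLp.equiv 2 (E₁ × E₂) q).2)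
                ((WithLp.equiv 2 (E₁ × E₂)).symm p),
              gradient
                (fun q : WithLp 2 (E₁ × E₂) =>
                  γ k (WithLp.equiv 2 (E₁ × E₂) q).1 * β l (WithLp.equiv 2 (E₁ × E₂) q).2)
                ((WithLp.equiv 2 (E₁ × E₂)).symm p)⟫
          + ⟪(WithLp.equiv 2 (E₁ × E₂)).symm ((0 : E₁), b₂),
              gradient
                (fun q : WithLp 2 (E₁ × E₂) =>
                  φ i (WithLp.equiv 2 (E₁ × E₂) q).1 * ψ j (WithLp.equiv 2 (E₁ × E₂) q).2)
                ((WithLp.equiv 2 (E₁ × E₂)).symm p)⟫ * (γ k p.1 * β l p.2)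
          + (-(κ * laplacian
                  (fun q : WithLp 2 (E₁ × E₂) =>
                    φ i (WithLp.equiv 2 (E₁ × E₂) q).1 * ψ j (WithLp.equiv 2 (E₁ × E₂) q).2)
                  ((WithLp.equiv 2 (E₁ × E₂)).symm p))
              + ⟪(WithLp.equiv 2 (E₁ × E₂)).symm ((0 : E₁), b₂),
                  gradient
                    (fun q : WithLp 2 (E₁ × E₂) =>
                      φ i (WithLp.equiv 2 (E₁ × E₂) q).1 * ψ j (WithLp.equiv 2 (E₁ × E₂) q).2)
                    ((WithLp.equiv 2 (E₁ × E₂)).symm p)⟫)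
            * (τ * ⟪(WithLp.equiv 2 (E₁ × E₂)).symm ((0 : E₁), b₂),
                  gradient
                    (fun q : WithLp 2 (E₁ × E₂) =>
                      γ k (WithLp.equiv 2 (E₁ × E₂) q).1 * β l (WithLp.equiv 2 (E₁ × E₂) q).2)
                    ((WithLp.equiv 2 (E₁ × E₂)).symm p)⟫)) ∂(μ₁.prod μ₂)) :
    S = κ • (K₁₁ ⊗ₖ K₂₂) + κ • (K₁₂ ⊗ₖ K₂₁) + K₁₂ ⊗ₖ K₂₃
        - (κ * τ) • (K₁₃ ⊗ₖ K₂₄) - (κ * τ) • (K₁₂ ⊗ₖ K₂₅) + τ • (K₁₂ ⊗ₖ K₂₆) := by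
  ext ⟨k, l⟩ ⟨i, j⟩
  simp only [WithLp.equiv_apply, WithLp.equiv_symm_apply] at hS
  calc S (k, l) (i, j)
      = ∫ p : E₁ × E₂, ∑ m : Fin 6,
          ![κ, κ, 1, -(κ * τ), -(κ * τ), τ] m *
          (![fun x => ⟪gradient (φ i) x, gradient (γ k) x⟫, fun x => φ i x * γ k x,
              fun x => φ i x * γ k x, fun x => laplacian (φ i) x * γ k x,
              fun x => φ i x * γ k x, fun x => φ i x * γ k x] m p.1 *
            ![fun y => ψ j y * β l y, fun y => ⟪gradient (ψ j) y, gradient (β l) y⟫,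
              fun y => ⟪b₂, gradient (ψ j) y⟫ * β l y, fun y => ψ j y * ⟪b₂, gradient (β l) y⟫,
              fun y => laplacian (ψ j) y * ⟪b₂, gradient (β l) y⟫,
              fun y => ⟪b₂, gradient (ψ j) y⟫ * ⟪b₂, gradient (β l) y⟫] m p.2) ∂μ₁.prod μ₂ := by
        rw [hS]
        congr 1
        funext p
        rw [gradient_prod_mul ((hφ i).differentiable two_ne_zero _)
            ((hψ j).differentiable two_ne_zero _),
          gradient_prod_mul ((hγ k).differentiable two_ne_zero _)
            ((hβ l).differentiable two_ne_zero _),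
          laplacian_prod_mul (hφ i) (hψ j)]
        simp only [Fin.sum_univ_six, Fin.isValue, Matrix.cons_val_zero, Matrix.cons_val_one,
          Matrix.cons_val, WithLp.prod_inner_apply, real_inner_smul_left, real_inner_smul_right,
          inner_zero_left, zero_add]
        ring
    _ = _ := integral_sum_prod_mul _
          (fun m => by fin_cases m; exacts [i₁₁ i k, i₁₂ i k, i₁₂ i k, i₁₃ i k, i₁₂ i k, i₁₂ i k])
          (fun m => by fin_cases m; exacts [i₂₂ j l, i₂₁ j l, i₂₃ j l, i₂₄ j l, i₂₅ j l, i₂₆ j l])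
    _ = _ := by
        simp only [Fin.sum_univ_six, Fin.isValue, Matrix.cons_val_zero, Matrix.cons_val_one,
          Matrix.cons_val, Matrix.add_apply, Matrix.sub_apply, Matrix.smul_apply,
          Matrix.kroneckerMap_apply, smul_eq_mul, hK₁₁, hK₁₂, hK₁₃, hK₂₁, hK₂₂, hK₂₃, hK₂₄, hK₂₅,
          hK₂₆]
        ring

/-- The global SUPG-stabilized stiffness matrix for the advection-diffusion
equation `−κΔu + b·∇u = f`, with advection vector `b = (0, b₂)` aligned with the second
subdomain, diffusivity `κ` and stabilization parameter `τ`, whose entries are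
`S_{(k,l),(i,j)} = ∫ κ⟪∇(φᵢψⱼ),∇(γₖβₗ)⟫ + ⟪b,∇(φᵢψⱼ)⟫γₖβₗ
+ (−κΔ(φᵢψⱼ) + ⟪b,∇(φᵢψⱼ)⟫)·τ⟪b,∇(γₖβₗ)⟫ d(μ₁×μ₂)`, equals
`κ K₁₁⊗K₂₂ + κ K₁₂⊗K₂₁ + K₁₂⊗K₂₃ − κτ K₁₃⊗K₂₄ − κτ K₁₂⊗K₂₅ + τ K₁₂⊗K₂₆`. -/
theorem supg_stiffness_matrix_kronecker {E₁ E₂ : Type*} {N M : ℕ}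
    [NormedAddCommGroup E₁] [InnerProductSpace ℝ E₁] [FiniteDimensional ℝ E₁]
    [MeasurableSpace E₁] [BorelSpace E₁]
    [NormedAddCommGroup E₂] [InnerProductSpace ℝ E₂] [FiniteDimensional ℝ E₂]
    [MeasurableSpace E₂] [BorelSpace E₂]
    (μ₁ : Measure E₁) (μ₂ : Measure E₂) [SigmaFinite μ₁] [SigmaFinite μ₂]
    (b₂ : E₂) (κ τ : ℝ)
    (φ γ : Fin N → E₁ → ℝ) (ψ β : Fin M → E₂ → ℝ)
    (hφ : ∀ i, ContDiff ℝ 2 (φ i)) (hγ : ∀ k, ContDiff ℝ 2 (γ k))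
    (hψ : ∀ j, ContDiff ℝ 2 (ψ j)) (hβ : ∀ l, ContDiff ℝ 2 (β l))
    (i₁₁ : ∀ i k, Integrable (fun x => ⟪gradient (φ i) x, gradient (γ k) x⟫) μ₁)
    (i₁₂ : ∀ i k, Integrable (fun x => φ i x * γ k x) μ₁)
    (i₁₃ : ∀ i k, Integrable (fun x => laplacian (φ i) x * γ k x) μ₁)
    (i₂₁ : ∀ j l, Integrable (fun y => ⟪gradient (ψ j) y, gradient (β l) y⟫) μ₂)
    (i₂₂ : ∀ j l, Integrable (fun y => ψ j y * β l y) μ₂)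
    (i₂₃ : ∀ j l, Integrable (fun y => ⟪b₂, gradient (ψ j) y⟫ * β l y) μ₂)
    (i₂₄ : ∀ j l, Integrable (fun y => ψ j y * ⟪b₂, gradient (β l) y⟫) μ₂)
    (i₂₅ : ∀ j l, Integrable (fun y => laplacian (ψ j) y * ⟪b₂, gradient (β l) y⟫) μ₂)
    (i₂₆ : ∀ j l, Integrable (fun y => ⟪b₂, gradient (ψ j) y⟫ * ⟪b₂, gradient (β l) y⟫) μ₂)
    (K₁₁ K₁₂ K₁₃ : Matrix (Fin N) (Fin N) ℝ)
    (K₂₁ K₂₂ K₂₃ K₂₄ K₂₅ K₂₆ : Matrix (Fin M) (Fin M) ℝ)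
    (hK₁₁ : ∀ k i, K₁₁ k i = ∫ x, ⟪gradient (φ i) x, gradient (γ k) x⟫ ∂μ₁)
    (hK₁₂ : ∀ k i, K₁₂ k i = ∫ x, φ i x * γ k x ∂μ₁)
    (hK₁₃ : ∀ k i, K₁₃ k i = ∫ x, laplacian (φ i) x * γ k x ∂μ₁)
    (hK₂₁ : ∀ l j, K₂₁ l j = ∫ y, ⟪gradient (ψ j) y, gradient (β l) y⟫ ∂μ₂)
    (hK₂₂ : ∀ l j, K₂₂ l j = ∫ y, ψ j y * β l y ∂μ₂)
    (hK₂₃ : ∀ l j, K₂₃ l j = ∫ y, ⟪b₂, gradient (ψ j) y⟫ * β l y ∂μ₂)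
    (hK₂₄ : ∀ l j, K₂₄ l j = ∫ y, ψ j y * ⟪b₂, gradient (β l) y⟫ ∂μ₂)
    (hK₂₅ : ∀ l j, K₂₅ l j = ∫ y, laplacian (ψ j) y * ⟪b₂, gradient (β l) y⟫ ∂μ₂)
    (hK₂₆ : ∀ l j, K₂₆ l j = ∫ y, ⟪b₂, gradient (ψ j) y⟫ * ⟪b₂, gradient (β l) y⟫ ∂μ₂)
    (S : Matrix (Fin N × Fin M) (Fin N × Fin M) ℝ)
    (hS : ∀ k l i j, S (k, l) (i, j) =
      ∫ p : E₁ × E₂,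
        (κ * ⟪gradient
                (fun q : WithLp 2 (E₁ × E₂) =>
                  φ i (WithLp.equiv 2 (E₁ × E₂) q).1 * ψ j (WithLp.equiv 2 (E₁ × E₂) q).2)
                ((WithLp.equiv 2 (E₁ × E₂)).symm p),
              gradient
                (fun q : WithLp 2 (E₁ × E₂) =>
                  γ k (WithLp.equiv 2 (E₁ × E₂) q).1 * β l (WithLp.equiv 2 (E₁ × E₂) q).2)
                ((WithLp.equiv 2 (E₁ × E₂)).symm p)⟫
          + ⟪(WithLp.equiv 2 (E₁ × E₂)).symm ((0 : E₁), b₂),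
              gradient
                (fun q : WithLp 2 (E₁ × E₂) =>
                  φ i (WithLp.equiv 2 (E₁ × E₂) q).1 * ψ j (WithLp.equiv 2 (E₁ × E₂) q).2)
                ((WithLp.equiv 2 (E₁ × E₂)).symm p)⟫ * (γ k p.1 * β l p.2)
          + (-(κ * laplacian
                  (fun q : WithLp 2 (E₁ × E₂) =>
                    φ i (WithLp.equiv 2 (E₁ × E₂) q).1 * ψ j (WithLp.equiv 2 (E₁ × E₂) q).2)
                  ((WithLp.equiv 2 (E₁ × E₂)).symm p))
              + ⟪(WithLp.equiv 2 (E₁ × E₂)).symm ((0 : E₁), b₂),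
                  gradient
                    (fun q : WithLp 2 (E₁ × E₂) =>
                      φ i (WithLp.equiv 2 (E₁ × E₂) q).1 * ψ j (WithLp.equiv 2 (E₁ × E₂) q).2)
                    ((WithLp.equiv 2 (E₁ × E₂)).symm p)⟫)
            * (τ * ⟪(WithLp.equiv 2 (E₁ × E₂)).symm ((0 : E₁), b₂),
                  gradient
                    (fun q : WithLp 2 (E₁ × E₂) =>
                      γ k (WithLp.equiv 2 (E₁ × E₂) q).1 * β l (WithLp.equiv 2 (E₁ × E₂) q).2)
                    ((WithLp.equiv 2 (E₁ × E₂)).symm p)⟫)) ∂(μ₁.prod μ₂)) :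
    S = κ • (K₁₁ ⊗ₖ K₂₂) + κ • (K₁₂ ⊗ₖ K₂₁) + K₁₂ ⊗ₖ K₂₃
        - (κ * τ) • (K₁₃ ⊗ₖ K₂₄) - (κ * τ) • (K₁₂ ⊗ₖ K₂₅) + τ • (K₁₂ ⊗ₖ K₂₆) :=
  supg_stiffness_matrix_kronecker_general μ₁ μ₂ b₂ κ τ φ γ ψ β hφ hγ hψ hβ i₁₁ i₁₂ i₁₃ i₂₁ i₂₂ i₂₃
    i₂₄ i₂₅ i₂₆ K₁₁ K₁₂ K₁₃ K₂₁ K₂₂ K₂₃ K₂₄ K₂₅ K₂₆ hK₁₁ hK₁₂ hK₁₃ hK₂₁ hK₂₂ hK₂₃ hK₂₄ hK₂₅ hK₂₆ S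
    hS
end
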